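/- If G and H are finite graphs, each with at least one vertex, then gp(G + H) = max{ω(G) + ω(H), η(G), η(H)}. -/

import Mathlib

namespace SimpleGraph

variable {V : Type*}

/-- `S` is a general position set of `G`: no vertex of `S` lies on a geodesic
(shortest path) between two other vertices of `S`. -/
def IsGPSet (G : SimpleGraph V) (S : Set V) : Prop :=
  ∀ ⦃u v w : V⦄, u ∈ S → v ∈ S → w ∈ S → u ≠ v → u ≠ w → v ≠ w →
    ∀ p : G.Walk u v, p.IsPath → p.length = G.dist u v → w ∉ p.support

/-- The general position number of `G`: the maximum cardinality of a general
position set of `G`. -/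
noncomputable def gpNumber (G : SimpleGraph V) : ℕ :=
  sSup {n | ∃ S : Set V, G.IsGPSet S ∧ n = S.ncard}

/-- `ρ(G)`: the maximum number of vertices in a union of pairwise independent
complete subgraphs of `G`, where complete subgraphs `Q`, `Q'` are independent
if `d_G(u,u') ≥ 2` for every `u ∈ Q` and `u' ∈ Q'`. -/
noncomputable def rho (G : SimpleGraph V) : ℕ :=
  sSup {n | ∃ 𝒬 : Finset (Finset V),
    (∀ Q ∈ 𝒬, G.IsClique (Q : Set V)) ∧
    (∀ Q ∈ 𝒬, ∀ Q' ∈ 𝒬, Q ≠ Q' → ∀ u ∈ Q, ∀ u' ∈ Q', 2 ≤ G.edist u u') ∧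
    n = (⋃ Q ∈ 𝒬, (Q : Set V)).ncard}

/-- A graph is complete multipartite iff non-adjacency is transitive. -/
def IsCompleteMultipartite' (G : SimpleGraph V) : Prop := Transitive (¬G.Adj · ·)

/-- `η(G)`: the maximum order of an induced complete multipartite subgraph of
the complement of `G`. -/
noncomputable def eta (G : SimpleGraph V) : ℕ :=
  sSup {n | ∃ B : Set V, (Gᶜ.induce B).IsCompleteMultipartite' ∧ n = B.ncard}

/-- An independent set of a graph. -/
def IsIndepSet' (G : SimpleGraph V) (S : Set V) : Prop :=
  S.Pairwise fun u v => ¬ G.Adj u v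

/-- The independence number `α(G)`. -/
noncomputable def indepNum' (G : SimpleGraph V) : ℕ :=
  sSup {n | ∃ S : Set V, G.IsIndepSet' S ∧ n = S.ncard}

end SimpleGraph

/-- The Kneser graph `K(n,k)`: vertices are the `k`-element subsets of an
`n`-element set, two vertices adjacent iff the corresponding sets are disjoint. -/
def kneserGraph (n k : ℕ) : SimpleGraph {s : Finset (Fin n) // s.card = k} where
  Adj a b := Disjoint a.1 b.1 ∧ a ≠ b
  symm := by
    constructor
    rintro a b ⟨h1, h2⟩
    exact ⟨h1.symm, h2.symm⟩
  loopless := by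
    constructor
    rintro a ⟨-, h⟩
    exact h rfl

/-- The join `G + H` of two (disjoint) graphs: the disjoint union of `G` and
`H` together with all edges between a vertex of `G` and a vertex of `H`. -/
def graphJoin {α β : Type*} (G : SimpleGraph α) (H : SimpleGraph β) :
    SimpleGraph (α ⊕ β) where
  Adj x y := match x, y with
    | Sum.inl a, Sum.inl a' => G.Adj a a'
    | Sum.inr b, Sum.inr b' => H.Adj b b'
    | _, _ => True
  symm := by
    constructor
    rintro (a | b) (a' | b') h <;> simp_all
    exacts [G.adj_symm h, H.adj_symm h]
  loopless := by
    constructor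
    rintro (a | b) h <;> simp_all

/-!
Because `G` and `H` are nonempty, `G + H` has diameter at most two, so a vertex `w` lies on a
geodesic between two other vertices `u`, `v` exactly when `u - w - v` is an induced path.
Hence the general position sets of `G + H` are the sets inducing a disjoint union of cliques
("cluster sets"), which are precisely the sets inducing a complete multipartite subgraph of the
complement; thus `gp(G + H) = η(G + H)`. A cluster set of `G + H` lying on one side of the join
is a cluster set of that side, and one meeting both sides is a clique on each side, since every
vertex of one side is adjacent to all of the other.
-/

open Set Sum

namespace SimpleGraph

variable {V : Type*} {G : SimpleGraph V} {S : Set V}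

def IsClusterSet (G : SimpleGraph V) (S : Set V) : Prop :=
  ∀ ⦃u v w⦄, u ∈ S → v ∈ S → w ∈ S → u ≠ v → G.Adj u w → G.Adj w v → G.Adj u v

theorem isCompleteMultipartite'_compl_induce_iff :
    (Gᶜ.induce S).IsCompleteMultipartite' ↔ G.IsClusterSet S := by
  have not_adj (x y : S) : ¬(Gᶜ.induce S).Adj x y ↔ (x : V) = y ∨ G.Adj x y := by
    simp only [comap_adj, Function.Embedding.subtype_apply, compl_adj]
    tauto
  refine ⟨fun h u v w hu hv hw huv huw hwv => ?_, fun h x y z hxy hyz => ?_⟩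
  · have := h (x := ⟨u, hu⟩) (y := ⟨w, hw⟩) (z := ⟨v, hv⟩)
    simp only [not_adj] at this
    exact (this (.inr huw) (.inr hwv)).resolve_left huv
  · obtain ⟨x, hx⟩ := x
    obtain ⟨y, hy⟩ := y
    obtain ⟨z, hz⟩ := z
    simp only [not_adj] at hxy hyz ⊢
    rcases hxy with rfl | hxy
    · exact hyz
    rcases hyz with rfl | hyz
    · exact .inr hxy
    exact or_iff_not_imp_left.mpr fun hxz => h hx hz hy hxz hxy hyz

theorem IsClique.isClusterSet (h : G.IsClique S) : G.IsClusterSet S :=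
  fun _ _ _ hu hv _ huv _ _ => h hu hv huv

theorem dist_eq_two_of_adj_of_adj {u v w : V} (huv : u ≠ v) (hn : ¬G.Adj u v)
    (huw : G.Adj u w) (hwv : G.Adj w v) : G.dist u v = 2 := by
  simp [dist, edist_eq_two_iff.mpr ⟨huv, hn, w, huw, hwv.symm⟩]

theorem edist_le_two_of_adj_of_adj {u v w : V} (huw : G.Adj u w)
    (hwv : G.Adj w v) : G.edist u v ≤ 2 :=
  (Walk.cons huw (.cons hwv .nil)).edist_le

theorem IsGPSet.isClusterSet (hS : G.IsGPSet S) : G.IsClusterSet S := by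
  intro u v w hu hv hw huv huw hwv
  by_contra hn
  let p : G.Walk u v := .cons huw (.cons hwv .nil)
  refine hS hu hv hw huv huw.ne hwv.ne.symm p ?_ ?_ (by simp [p])
  · simp [p, Walk.isPath_def, huw.ne, hwv.ne, huv]
  · simp [p, dist_eq_two_of_adj_of_adj huv hn huw hwv]

theorem IsClusterSet.isGPSet (hG : G.ediam ≤ 2) (hS : G.IsClusterSet S) : G.IsGPSet S := by
  intro u v w hu hv hw huv huw hvw p _ hp hwp
  have hdist : G.dist u v ≤ 2 := ENat.toNat_le_of_le_natCast (edist_le_ediam.trans hG)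
  match p, hp, hwp with
  | .nil, _, _ => exact huv rfl
  | .cons _ .nil, _, hwp => simp [huw.symm, hvw.symm] at hwp
  | .cons h₁ (.cons h₂ .nil), hp, hwp =>
    obtain rfl : w = _ := by simpa [huw.symm, hvw.symm] using hwp
    simp [dist_eq_one_iff_adj.mpr (hS hu hv hw huv h₁ h₂)] at hp
  | .cons _ (.cons _ (.cons _ _)), hp, _ =>
    simp only [Walk.length_cons] at hp
    omega

theorem gpNumber_eq_eta_of_ediam_le_two (hG : G.ediam ≤ 2) : G.gpNumber = G.eta := by
  have (S : Set V) : G.IsGPSet S ↔ (Gᶜ.induce S).IsCompleteMultipartite' := by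
    rw [isCompleteMultipartite'_compl_induce_iff]
    exact ⟨IsGPSet.isClusterSet, IsClusterSet.isGPSet hG⟩
  simp only [gpNumber, eta, this]

section Finite

variable [Finite V]

theorem IsClique.ncard_le_cliqueNum (h : G.IsClique S) : S.ncard ≤ G.cliqueNum := by
  have := Fintype.ofFinite V
  classical
  rw [ncard_eq_toFinset_card']
  exact IsClique.card_le_cliqueNum (tc := by rwa [coe_toFinset])

theorem bddAbove_eta_set :
    BddAbove {n | ∃ B : Set V, (Gᶜ.induce B).IsCompleteMultipartite' ∧ n = B.ncard} :=
  ⟨Nat.card V, by rintro n ⟨B, -, rfl⟩; exact ncard_le_card B⟩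

theorem IsClusterSet.ncard_le_eta (h : G.IsClusterSet S) : S.ncard ≤ G.eta :=
  le_csSup bddAbove_eta_set ⟨S, isCompleteMultipartite'_compl_induce_iff.mpr h, rfl⟩

theorem exists_isClusterSet_ncard_eq_eta : ∃ S, G.IsClusterSet S ∧ S.ncard = G.eta := by
  have hempty : G.IsClusterSet ∅ := fun _ _ _ h => h.elim
  obtain ⟨S, hS, hcard⟩ : G.eta ∈ {n | ∃ B : Set V, (Gᶜ.induce B).IsCompleteMultipartite' ∧
      n = B.ncard} :=
    Nat.sSup_mem ⟨0, ∅, isCompleteMultipartite'_compl_induce_iff.mpr hempty, (ncard_empty _).symm⟩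
      bddAbove_eta_set
  exact ⟨S, isCompleteMultipartite'_compl_induce_iff.mp hS, hcard.symm⟩

end Finite

variable {α β : Type*} {G : SimpleGraph α} {H : SimpleGraph β}

@[simp]
theorem graphJoin_adj_inl_inl {a a' : α} : (graphJoin G H).Adj (inl a) (inl a') ↔ G.Adj a a' :=
  Iff.rfl

@[simp]
theorem graphJoin_adj_inr_inr {b b' : β} : (graphJoin G H).Adj (inr b) (inr b') ↔ H.Adj b b' :=
  Iff.rfl

theorem graphJoin_adj_inl_inr (a : α) (b : β) : (graphJoin G H).Adj (inl a) (inr b) := trivial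

theorem graphJoin_adj_inr_inl (b : β) (a : α) : (graphJoin G H).Adj (inr b) (inl a) := trivial

theorem graphJoin_ediam_le_two [Nonempty α] [Nonempty β] : (graphJoin G H).ediam ≤ 2 := by
  obtain ⟨a⟩ := ‹Nonempty α›
  obtain ⟨b⟩ := ‹Nonempty β›
  rw [ediam_le_iff]
  rintro (a₁ | b₁) (a₂ | b₂)
  · exact edist_le_two_of_adj_of_adj (graphJoin_adj_inl_inr a₁ b) (graphJoin_adj_inr_inl b a₂)
  · exact (edist_eq_one_iff_adj.mpr (graphJoin_adj_inl_inr a₁ b₂)).trans_le one_le_two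
  · exact (edist_eq_one_iff_adj.mpr (graphJoin_adj_inr_inl b₁ a₂)).trans_le one_le_two
  · exact edist_le_two_of_adj_of_adj (graphJoin_adj_inr_inl b₁ a) (graphJoin_adj_inl_inr a b₂)

theorem IsClique.graphJoin {A : Set α} {B : Set β} (hA : G.IsClique A) (hB : H.IsClique B) :
    (graphJoin G H).IsClique (inl '' A ∪ inr '' B) := by
  rintro _ (⟨a, ha, rfl⟩ | ⟨b, hb, rfl⟩) _ (⟨a', ha', rfl⟩ | ⟨b', hb', rfl⟩) hne
  · exact hA ha ha' (ne_of_apply_ne _ hne)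
  · exact graphJoin_adj_inl_inr a b'
  · exact graphJoin_adj_inr_inl b a'
  · exact hB hb hb' (ne_of_apply_ne _ hne)

theorem IsClusterSet.image_inl {A : Set α} (hA : G.IsClusterSet A) :
    (graphJoin G H).IsClusterSet (inl '' A) := by
  rintro _ _ _ ⟨u, hu, rfl⟩ ⟨v, hv, rfl⟩ ⟨w, hw, rfl⟩ huv huw hwv
  exact hA hu hv hw (ne_of_apply_ne _ huv) huw hwv

theorem IsClusterSet.image_inr {B : Set β} (hB : H.IsClusterSet B) :
    (graphJoin G H).IsClusterSet (inr '' B) := by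
  rintro _ _ _ ⟨u, hu, rfl⟩ ⟨v, hv, rfl⟩ ⟨w, hw, rfl⟩ huv huw hwv
  exact hB hu hv hw (ne_of_apply_ne _ huv) huw hwv

variable {S : Set (α ⊕ β)}

theorem IsClusterSet.preimage_inl (hS : (graphJoin G H).IsClusterSet S) :
    G.IsClusterSet (inl ⁻¹' S) :=
  fun _ _ _ hu hv hw huv => hS hu hv hw (inl_injective.ne huv)

theorem IsClusterSet.preimage_inr (hS : (graphJoin G H).IsClusterSet S) :
    H.IsClusterSet (inr ⁻¹' S) :=
  fun _ _ _ hu hv hw huv => hS hu hv hw (inr_injective.ne huv)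

theorem IsClusterSet.isClique_preimage_inl (hS : (graphJoin G H).IsClusterSet S) {b : β}
    (hb : inr b ∈ S) : G.IsClique (inl ⁻¹' S) :=
  fun _ hu _ hv huv => hS hu hv hb (inl_injective.ne huv) trivial trivial

theorem IsClusterSet.isClique_preimage_inr (hS : (graphJoin G H).IsClusterSet S) {a : α}
    (ha : inl a ∈ S) : H.IsClique (inr ⁻¹' S) :=
  fun _ hu _ hv huv => hS hu hv ha (inr_injective.ne huv) trivial trivial

theorem ncard_image_inl_union_image_inr [Finite α] [Finite β] (A : Set α) (B : Set β) :
    (inl '' A ∪ inr '' B : Set (α ⊕ β)).ncard = A.ncard + B.ncard := by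
  rw [ncard_union_eq disjoint_image_inl_image_inr, ncard_image_of_injective _ inl_injective,
    ncard_image_of_injective _ inr_injective]

theorem eta_graphJoin [Finite α] [Finite β] :
    (graphJoin G H).eta = max (G.cliqueNum + H.cliqueNum) (max G.eta H.eta) := by
  refine le_antisymm ?_ (max_le ?_ (max_le ?_ ?_))
  · obtain ⟨S, hS, hcard⟩ := (graphJoin G H).exists_isClusterSet_ncard_eq_eta
    rw [← hcard, ← image_preimage_inl_union_image_preimage_inr S, ncard_image_inl_union_image_inr]
    rcases (inr ⁻¹' S).eq_empty_or_nonempty with hB | ⟨b, hb⟩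
    · rw [hB, ncard_empty, add_zero]
      exact le_max_of_le_right (le_max_of_le_left hS.preimage_inl.ncard_le_eta)
    rcases (inl ⁻¹' S).eq_empty_or_nonempty with hA | ⟨a, ha⟩
    · rw [hA, ncard_empty, zero_add]
      exact le_max_of_le_right (le_max_of_le_right hS.preimage_inr.ncard_le_eta)
    exact le_max_of_le_left (add_le_add (hS.isClique_preimage_inl hb).ncard_le_cliqueNum
      (hS.isClique_preimage_inr ha).ncard_le_cliqueNum)
  · obtain ⟨s, hs⟩ := G.exists_isNClique_cliqueNum
    obtain ⟨t, ht⟩ := H.exists_isNClique_cliqueNum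
    have := (hs.isClique.graphJoin ht.isClique).isClusterSet.ncard_le_eta
    rwa [ncard_image_inl_union_image_inr, ncard_coe_finset, ncard_coe_finset, hs.card_eq,
      ht.card_eq] at this
  · obtain ⟨A, hA, hcard⟩ := G.exists_isClusterSet_ncard_eq_eta
    have := (hA.image_inl (H := H)).ncard_le_eta
    rwa [ncard_image_of_injective _ inl_injective, hcard] at this
  · obtain ⟨B, hB, hcard⟩ := H.exists_isClusterSet_ncard_eq_eta
    have := (hB.image_inr (G := G)).ncard_le_eta
    rwa [ncard_image_of_injective _ inr_injective, hcard] at this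

end SimpleGraph

/-- If `G` and `H` are finite graphs, each with at least one vertex, then
`gp(G + H) = max {ω(G) + ω(H), η(G), η(H)}`. -/
theorem gpNumber_graphJoin_eq_max_eta {α β : Type*} [Fintype α] [Fintype β]
    [Nonempty α] [Nonempty β] (G : SimpleGraph α) (H : SimpleGraph β) :
    (graphJoin G H).gpNumber = max (G.cliqueNum + H.cliqueNum) (max G.eta H.eta) := by
  rw [SimpleGraph.gpNumber_eq_eta_of_ediam_le_two SimpleGraph.graphJoin_ediam_le_two,
    SimpleGraph.eta_graphJoin]
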